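/- arXiv:2603.20545 — 3 statements merged into one kernel-verified Lean document; each statement's English description precedes it below -/
import Mathlib

section
/- Let G be a commutative group, I a type, and J : I → I → Prop a reflexive, symmetric relation such that every connected component of the associated graph is a clique, i.e., whenever i and j are joined by a finite chain of J-edges (j is reachable from i via the reflexive-transitive closure of J), then J i j holds. Suppose μ assigns to every pair (i,j) with J i j an element μ_{ij} ∈ G such that μ_{ii} = 1, μ_{ij} = μ_{ji}⁻¹, and μ_{ij}·μ_{jk} = μ_{ik} whenever J i j, J j k and J i k all hold. Then μ is exact: there exists λ : I → G with μ_{ij} = λ_i·λ_j⁻¹ for every pair (i,j) with J i j. -/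
/-- Cohomological step of Lemma 2.4: on a reflexive symmetric relation `J` all of
whose connected components are cliques (reachability implies a direct edge), every
closed `G`-valued 1-cochain `μ` is exact: `μ i j = λ i * (λ j)⁻¹` for some `λ : I → G`. -/
theorem stmt_2 {G : Type*} [CommGroup G] {I : Type*}
    (J : I → I → Prop)
    (hrefl : ∀ i, J i i)
    (hsymm : ∀ i j, J i j → J j i)
    (hclique : ∀ i j, Relation.ReflTransGen J i j → J i j)
    (μ : ∀ i j, J i j → G)
    (hμ_ii : ∀ i, μ i i (hrefl i) = 1)
    (hμ_inv : ∀ i j (h : J i j), μ i j h = (μ j i (hsymm i j h))⁻¹)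
    (hμ_mul : ∀ i j k (hij : J i j) (hjk : J j k) (hik : J i k),
      μ i j hij * μ j k hjk = μ i k hik) :
    ∃ lam : I → G, ∀ i j (h : J i j), μ i j h = lam i * (lam j)⁻¹ := by
  classical
  have htrans : ∀ {i j k}, J i j → J j k → J i k := fun hij hjk =>
    hclique _ _ ((Relation.ReflTransGen.single hij).tail hjk)
  let s : Setoid I := ⟨J, ⟨hrefl, fun h => hsymm _ _ h, fun h h' => htrans h h'⟩⟩
  have hrep : ∀ i : I, J i (Quotient.mk s i).out := fun i =>
    Quotient.exact (s := s) ((Quotient.out_eq _).symm)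
  refine ⟨fun i => μ i _ (hrep i), fun i j h => ?_⟩
  have hq : Quotient.mk s i = Quotient.mk s j := Quotient.sound h
  have e : (Quotient.mk s i).out = (Quotient.mk s j).out := by rw [hq]
  have h1 : J i (Quotient.mk s j).out := e ▸ hrep i
  have key := hμ_mul i j (Quotient.mk s j).out h (hrep j) h1
  simp only [e]
  rw [← key, mul_inv_cancel_right]
end

section
/- Let K be a field, I a finite type, and J : I → I → Prop a reflexive, symmetric, composition-closed relation (J i j and J j k imply J i k), and let μ assign to every pair (i,j) with J i j a unit μ_{ij} ∈ Kˣ satisfying μ_{ii} = 1, μ_{ij} = μ_{ji}⁻¹, and μ_{ij}·μ_{jk} = μ_{ik}. Let Λ be any type and let N : Λ → Matrix I I K be a family of matrices whose support respects J, i.e., N(X)_{j i} = 0 whenever J i j fails. Define a twisted family E : Λ → Matrix I I K by E(X)_{j i} = μ_{ij}·N(X)_{j i} when J i j holds and E(X)_{j i} = 0 otherwise. Then there exists a family of units λ : I → Kˣ such that, with D the diagonal matrix with entries λ, one has E(X) = D⁻¹ · N(X) · D for every X ∈ Λ; in particular all the matrices E(X) are simultaneously conjugate to the matrices N(X) by a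 single invertible diagonal matrix. -/
/-- Decategorified core of Theorem 2.8 (encircling module ≅ NIM-rep): if the matrices
`N X` are supported on a reflexive, symmetric, composition-closed relation `J` and
`E X` is the twist of `N X` by a closed 1-cochain `μ` of units, then all the `E X`
are simultaneously conjugate to the `N X` by a single invertible diagonal matrix. -/
theorem stmt_3 {K : Type*} [Field K] {I : Type*} [Fintype I] [DecidableEq I]
    (J : I → I → Prop)
    (hrefl : ∀ i, J i i)
    (hsymm : ∀ i j, J i j → J j i)
    (htrans : ∀ i j k, J i j → J j k → J i k)
    (μ : ∀ i j, J i j → Kˣ)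
    (hμ_ii : ∀ i, μ i i (hrefl i) = 1)
    (hμ_inv : ∀ i j (h : J i j), μ i j h = (μ j i (hsymm i j h))⁻¹)
    (hμ_mul : ∀ i j k (hij : J i j) (hjk : J j k),
      μ i j hij * μ j k hjk = μ i k (htrans i j k hij hjk))
    {Λ : Type*} (N E : Λ → Matrix I I K)
    (hN : ∀ X i j, ¬ J i j → N X j i = 0)
    (hE : ∀ X i j (h : J i j), E X j i = (μ i j h : K) * N X j i)
    (hE0 : ∀ X i j, ¬ J i j → E X j i = 0) :
    ∃ lam : I → Kˣ,
      ∀ X, E X = (Matrix.diagonal fun i => (lam i : K))⁻¹ * N X *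
        Matrix.diagonal (fun i => (lam i : K)) := by
  classical
  -- J is an equivalence relation; pick a representative of each class.
  let s : Setoid I := ⟨J, ⟨hrefl, fun h => hsymm _ _ h, fun h h' => htrans _ _ _ h h'⟩⟩
  let r : I → I := fun i => (Quotient.mk s i).out
  have hJr : ∀ i, J i (r i) := by
    intro i
    exact s.symm (Quotient.exact (Quotient.out_eq (Quotient.mk s i)))
  have hr_eq : ∀ i j, J i j → r i = r j := by
    intro i j h
    simp only [r, Quotient.sound (a := i) (b := j) (s := s) h]
  refine ⟨fun i => μ i (r i) (hJr i), ?_⟩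
  intro X
  have hDinv : (Matrix.diagonal fun i => ((μ i (r i) (hJr i) : Kˣ) : K))⁻¹ =
      Matrix.diagonal fun i => (((μ i (r i) (hJr i))⁻¹ : Kˣ) : K) := by
    apply Matrix.inv_eq_right_inv
    rw [Matrix.diagonal_mul_diagonal]
    convert Matrix.diagonal_one
    simp
  rw [hDinv]
  ext j i
  rw [Matrix.mul_diagonal, Matrix.diagonal_mul]
  by_cases h : J i j
  · rw [hE X i j h]
    have hr : r j = r i := (hr_eq i j h).symm
    have key : (μ i j h : Kˣ) * μ j (r j) (hJr j) = μ i (r i) (hJr i) := by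
      rw [hμ_mul i j (r j) h (hJr j)]
      congr 1
    have key' : ((μ i j h : Kˣ) : K) =
        (((μ j (r j) (hJr j))⁻¹ : Kˣ) : K) * ((μ i (r i) (hJr i) : Kˣ) : K) := by
      rw [← key]
      push_cast
      field_simp
    rw [key']
    ring
  · rw [hE0 X i j h, hN X i j h]
    ring
end

section
/- Let K be a field and C a K-linear monoidal category with right duals (a right rigid category) whose tensor product is compatible with the additive and K-linear structure. Let S be an object, and let p, q : S ≅ S^∨∨ and p', q' : S^∨ ≅ S^∨∨∨ be isomorphisms satisfying the pivotal compatibility (p.hom)^∗ = p'.inv and (q.hom)^∗ = q'.inv, where f^∗ denotes the right adjoint mate (S^∨∨)^∨ = S^∨∨∨ ⟶ S^∨ of f : S ⟶ S^∨∨. Suppose a ∈ Kˣ and b ∈ K are scalars with p⁻¹ ∘ q = a·id_S and (p')⁻¹ ∘ q' = b·id_{S^∨}. Then (a·b)·id_{S^∨} = id_{S^∨}; in particular if the action of K on End(S^∨) by scalars is injective (e.g., End(S^∨) = K·id), then a·b = 1. -/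
open CategoryTheory CategoryTheory.MonoidalCategory

lemma rightAdjointMate_smul' {K : Type*} [Field K] {C : Type*} [Category C] [Preadditive C]
    [Linear K C] [MonoidalCategory C] [MonoidalPreadditive C] [MonoidalLinear K C]
    {X Y : C} [HasRightDual X] [HasRightDual Y] (c : K) (f : X ⟶ Y) :
    rightAdjointMate (c • f) = c • rightAdjointMate f := by
  simp [rightAdjointMate, Linear.smul_comp, Linear.comp_smul]

/-- Appendix Lemma A.1 (i), abstract form: for pivotal-compatible isomorphisms
`p q : S ≅ Sᘁᘁ` and `p' q' : Sᘁ ≅ Sᘁᘁᘁ` (i.e. the right adjoint mate of `p.hom`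
is `p'.inv`, and similarly for `q`), the comparison scalars satisfy `a·b = 1`
(as scalars acting on `𝟙 (Sᘁ)`, hence literally if the scalar action is injective). -/
theorem stmt_7 {K : Type*} [Field K] {C : Type*} [Category C] [Preadditive C]
    [Linear K C] [MonoidalCategory C] [MonoidalPreadditive C] [MonoidalLinear K C]
    [RightRigidCategory C]
    (S : C)
    (p q : S ≅ HasRightDual.rightDual (HasRightDual.rightDual S))
    (p' q' : HasRightDual.rightDual S ≅
      HasRightDual.rightDual (HasRightDual.rightDual (HasRightDual.rightDual S)))
    (hp : rightAdjointMate p.hom = p'.inv)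
    (hq : rightAdjointMate q.hom = q'.inv)
    (a : Kˣ) (b : K)
    (ha : q.hom ≫ p.inv = (a : K) • 𝟙 S)
    (hb : q'.hom ≫ p'.inv = b • 𝟙 (HasRightDual.rightDual S)) :
    ((a : K) * b) • 𝟙 (HasRightDual.rightDual S) = 𝟙 (HasRightDual.rightDual S) ∧
      ((Function.Injective fun c : K => c • 𝟙 (HasRightDual.rightDual S)) →
        (a : K) * b = 1) := by
  have hq' : q.hom = (a : K) • p.hom := by
    have := congrArg (· ≫ p.hom) ha
    simpa [Category.assoc, Linear.smul_comp] using this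
  have hmate : q'.inv = (a : K) • p'.inv := by
    rw [← hq, hq', rightAdjointMate_smul', hp]
  have key : b • 𝟙 (HasRightDual.rightDual S) = (a : K)⁻¹ • 𝟙 (HasRightDual.rightDual S) := by
    have hpinv : p'.inv = (a : K)⁻¹ • q'.inv := by
      rw [hmate, smul_smul, inv_mul_cancel₀ (Units.ne_zero a), one_smul]
    rw [← hb, hpinv, Linear.comp_smul, Iso.hom_inv_id]
  have main : ((a : K) * b) • 𝟙 (HasRightDual.rightDual S) = 𝟙 (HasRightDual.rightDual S) := by
    rw [mul_smul, key, smul_smul, mul_inv_cancel₀ (Units.ne_zero a), one_smul]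
  refine ⟨main, fun hinj => ?_⟩
  exact hinj (by simpa using main)
end
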